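/- arXiv:2008.03068 — 2 statements merged into one kernel-verified Lean document; each statement's English description precedes it below -/
import Mathlib

section
/- For 1 ≤ q < 2, sup_{t ∈ [0,1]} [(2/(2−q))·₂F₁(q/2, q/2 − 1; 1; t) + t^{q/2}·₂F₁(q/2, q/2; 2; t)] = 2Γ(2−q)/Γ(2−q/2)², attained at t = 1. -/
/-
With `a = q / 2 ∈ (0, 1)`, write the function as
`f t = F(a, a - 1; 1; t) / (1 - a) + t ^ a * F(a, a; 2; t)`. The coefficients of the two series are
linked by `[tⁿ⁺¹] F(a, a - 1; 1; t) = (a - 1) (a + n) / (n + 1) · [tⁿ] F(a, a; 2; t)`, so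
`f t - 1 / (1 - a)` is a series with nonnegative weights of the functions
`(n + 1) t ^ (a + n) - (a + n) t ^ (n + 1)`, each of which is at most its value `1 - a` at `t = 1`
by the weighted AM-GM inequality. The value at `t = 1` comes from Gauss's summation theorem, proved
through Euler's integral: expand `(1 - x) ^ (-b)` binomially inside the Beta integral
`∫₀¹ x ^ (a - 1) (1 - x) ^ (c - a - 1) dx` and integrate term by term.
-/

/-- The Gauss hypergeometric series ₂F₁(a,b;c;t). -/
noncomputable def hyp2F1 (a b c t : ℝ) : ℝ :=
  ∑' n : ℕ, ((ascPochhammer ℝ n).eval a * (ascPochhammer ℝ n).eval b)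
      / ((ascPochhammer ℝ n).eval c * n.factorial) * t ^ n

open Real MeasureTheory Set
open scoped Nat

theorem Real.Gamma_add_nat_eq {s : ℝ} (hs : 0 < s) (n : ℕ) :
    Gamma (s + n) = (ascPochhammer ℝ n).eval s * Gamma s := by
  induction n with
  | zero => simp
  | succ n ih =>
    rw [Nat.cast_succ, ← add_assoc, Gamma_add_one (by positivity), ih, ascPochhammer_succ_eval]
    ring

theorem ascPochhammer_eval_div_factorial_le {a : ℝ} (ha0 : 0 < a) (ha1 : a < 1) (n : ℕ) :
    (ascPochhammer ℝ n).eval a / n ! ≤ ((n : ℝ) + 1) ^ (a - 1) / Gamma (a + 1) := by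
  have hn : (0 : ℝ) < n + 1 := by positivity
  -- log-convexity of `Γ` at `a + n + 1 = a (n + 2) + (1 - a) (n + 1)`
  have hconv : (a + n) * ((ascPochhammer ℝ n).eval a * Gamma a) ≤ ((n : ℝ) + 1) ^ a * n ! := by
    have h := Gamma_mul_add_mul_le_rpow_Gamma_mul_rpow_Gamma (s := (n + 1 : ℕ) + 1) (t := n + 1)
      (by positivity) hn ha0 (sub_pos.2 ha1) (add_sub_cancel a 1)
    rwa [show a * (((n + 1 : ℕ) : ℝ) + 1) + (1 - a) * (n + 1) = (a + n) + 1 by push_cast; ring,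
      Gamma_add_one (by positivity), Gamma_add_nat_eq ha0, Gamma_nat_eq_factorial,
      Gamma_nat_eq_factorial, Nat.factorial_succ, Nat.cast_mul, Nat.cast_succ,
      mul_rpow hn.le (by positivity), mul_assoc, ← rpow_add (by positivity), add_sub_cancel,
      rpow_one] at h
  have hpos := mul_pos (ascPochhammer_pos n a ha0) (Gamma_pos_of_pos ha0)
  rw [Gamma_add_one ha0.ne', div_le_div_iff₀ (by positivity) (by positivity)]
  refine le_of_mul_le_mul_right ?_ hn
  calc (ascPochhammer ℝ n).eval a * (a * Gamma a) * (n + 1)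
      ≤ (a + n) * ((ascPochhammer ℝ n).eval a * Gamma a) := by
        nlinarith [mul_nonneg hpos.le (mul_nonneg (Nat.cast_nonneg (α := ℝ) n) (sub_pos.2 ha1).le)]
    _ ≤ ((n : ℝ) + 1) ^ a * n ! := hconv
    _ = ((n : ℝ) + 1) ^ (a - 1) * n ! * (n + 1) := by
        rw [rpow_sub_one hn.ne']
        field_simp

theorem ascPochhammer_eval_two (n : ℕ) : (ascPochhammer ℝ n).eval 2 = (n + 1)! := by
  induction n with
  | zero => simp
  | succ n ih =>
    rw [ascPochhammer_succ_eval, ih, Nat.factorial_succ (n + 1)]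
    push_cast
    ring

theorem hasSum_ascPochhammer_div_factorial_mul_pow (b : ℝ) {x : ℝ} (hx : |x| < 1) :
    HasSum (fun n : ℕ => (ascPochhammer ℝ n).eval b / n ! * x ^ n) ((1 - x) ^ (-b)) := by
  have h := (one_div_one_sub_rpow_hasFPowerSeriesOnBall_zero b).hasSum
    (y := x) (by simpa [enorm_eq_nnnorm, ← NNReal.coe_lt_coe] using hx)
  rw [zero_add, one_div, ← rpow_neg (by linarith [le_abs_self x])] at h
  refine h.congr_fun fun n => ?_
  rw [FormalMultilinearSeries.ofScalars_apply_eq, smul_eq_mul, Ring.choose_eq_smul,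
    Polynomial.descPochhammer_smeval_eq_ascPochhammer, Polynomial.ascPochhammer_smeval_eq_eval,
    show b + n - 1 - n + 1 = b by ring, smul_eq_mul, div_eq_inv_mul]

theorem Complex.ofReal_rpow_mul_one_sub_rpow {x : ℝ} (hx : x ∈ Icc 0 1) (s t : ℝ) :
    ((x ^ (s - 1) * (1 - x) ^ (t - 1) : ℝ) : ℂ)
      = (x : ℂ) ^ ((s : ℂ) - 1) * (1 - (x : ℂ)) ^ ((t : ℂ) - 1) := by
  rw [Complex.ofReal_mul, Complex.ofReal_cpow hx.1, Complex.ofReal_cpow (by linarith [hx.2])]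
  push_cast
  rfl

theorem integrableOn_rpow_mul_one_sub_rpow {s t : ℝ} (hs : 0 < s) (ht : 0 < t) :
    IntegrableOn (fun x : ℝ => x ^ (s - 1) * (1 - x) ^ (t - 1)) (Ioo 0 1) := by
  have h := Complex.betaIntegral_convergent (u := s) (v := t) (by simpa) (by simpa)
  rw [intervalIntegrable_iff_integrableOn_Ioc_of_le zero_le_one] at h
  refine IntegrableOn.congr_fun (h.mono_set Ioo_subset_Ioc_self).re (fun x hx => ?_)
    measurableSet_Ioo
  rw [RCLike.re_to_complex, ← Complex.ofReal_rpow_mul_one_sub_rpow (Ioo_subset_Icc_self hx),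
    Complex.ofReal_re]

theorem integral_rpow_mul_one_sub_rpow {s t : ℝ} (hs : 0 < s) (ht : 0 < t) :
    ∫ x in Ioo (0 : ℝ) 1, x ^ (s - 1) * (1 - x) ^ (t - 1)
      = Gamma s * Gamma t / Gamma (s + t) := by
  have h := Complex.betaIntegral_eq_Gamma_mul_div (u := s) (v := t) (by simpa) (by simpa)
  rw [← Complex.ofReal_add, Complex.Gamma_ofReal, Complex.Gamma_ofReal, Complex.Gamma_ofReal,
    ← Complex.ofReal_mul, ← Complex.ofReal_div, Complex.betaIntegral,
    intervalIntegral.integral_of_le zero_le_one, integral_Ioc_eq_integral_Ioo] at h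
  rw [← Complex.ofReal_inj, ← h, ← integral_complex_ofReal]
  exact setIntegral_congr_fun measurableSet_Ioo fun x hx =>
    Complex.ofReal_rpow_mul_one_sub_rpow (Ioo_subset_Icc_self hx) s t

noncomputable def hyp2F1Coeff (a b c : ℝ) (n : ℕ) : ℝ :=
  (ascPochhammer ℝ n).eval a * (ascPochhammer ℝ n).eval b / ((ascPochhammer ℝ n).eval c * n !)

theorem hyp2F1_eq_tsum (a b c t : ℝ) : hyp2F1 a b c t = ∑' n, hyp2F1Coeff a b c n * t ^ n := rfl

@[simp]
theorem hyp2F1Coeff_zero (a b c : ℝ) : hyp2F1Coeff a b c 0 = 1 := by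
  simp [hyp2F1Coeff]

theorem hyp2F1_one_eq_Gamma {a b c : ℝ} (ha : 0 < a) (hac : a < c) (habc : a + b < c)
    (hsum : Summable fun n => |hyp2F1Coeff a b c n|) :
    hyp2F1 a b c 1 = Gamma c * Gamma (c - a - b) / (Gamma (c - a) * Gamma (c - b)) := by
  have hc : 0 < c := ha.trans hac
  set K := Gamma a * Gamma (c - a) / Gamma c with hK
  set F : ℕ → ℝ → ℝ := fun n x =>
    (ascPochhammer ℝ n).eval b / n ! * (x ^ (a + n - 1) * (1 - x) ^ (c - a - 1)) with hF
  have hmoment (u : ℝ) (n : ℕ) :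
      ∫ x in Ioo (0 : ℝ) 1, u / n ! * (x ^ (a + n - 1) * (1 - x) ^ (c - a - 1))
        = K * ((ascPochhammer ℝ n).eval a * u / ((ascPochhammer ℝ n).eval c * n !)) := by
    rw [integral_const_mul, integral_rpow_mul_one_sub_rpow (by positivity) (sub_pos.2 hac),
      show a + n + (c - a) = c + n by ring, Gamma_add_nat_eq ha, Gamma_add_nat_eq hc]
    have := ascPochhammer_pos n c hc
    have := Gamma_pos_of_pos hc
    rw [hK]
    field_simp
  have hint (n : ℕ) : Integrable (F n) (volume.restrict (Ioo 0 1)) :=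
    (integrableOn_rpow_mul_one_sub_rpow (by positivity) (sub_pos.2 hac)).const_mul _
  have hnorm (n : ℕ) : ∫ x in Ioo (0 : ℝ) 1, ‖F n x‖ = K * |hyp2F1Coeff a b c n| := by
    rw [setIntegral_congr_fun measurableSet_Ioo (g := fun x =>
      |(ascPochhammer ℝ n).eval b| / n ! * (x ^ (a + n - 1) * (1 - x) ^ (c - a - 1))), hmoment,
      hyp2F1Coeff, abs_div, abs_mul, abs_mul, abs_of_pos (ascPochhammer_pos n a ha),
      abs_of_pos (ascPochhammer_pos n c hc), Nat.abs_cast]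
    intro x hx
    dsimp only [hF]
    rw [Real.norm_eq_abs, abs_mul, abs_div, Nat.abs_cast,
      abs_of_nonneg (mul_nonneg (rpow_nonneg hx.1.le _) (rpow_nonneg (sub_pos.2 hx.2).le _))]
  have hpoint : EqOn (fun x => ∑' n, F n x) (fun x => x ^ (a - 1) * (1 - x) ^ (c - a - b - 1))
      (Ioo 0 1) := by
    intro x hx
    have h1x : 0 < 1 - x := sub_pos.2 hx.2
    have hbinom := hasSum_ascPochhammer_div_factorial_mul_pow b
      (abs_lt.2 ⟨by linarith [hx.1], hx.2⟩)
    refine ((hbinom.mul_right (x ^ (a - 1) * (1 - x) ^ (c - a - 1))).congr_fun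
      fun n => ?_).tsum_eq.trans ?_
    · simp only [hF]
      rw [show a + n - 1 = (a - 1) + n by ring, rpow_add hx.1, rpow_natCast]
      ring
    · dsimp only
      rw [show c - a - b - 1 = -b + (c - a - 1) by ring, rpow_add h1x]
      ring
  have hswap := hasSum_integral_of_summable_integral_norm hint
    ((hsum.mul_left K).congr fun n => (hnorm n).symm)
  rw [setIntegral_congr_fun measurableSet_Ioo hpoint,
    show c - a - b - 1 = (c - a - b) - 1 by ring,
    integral_rpow_mul_one_sub_rpow ha (by linarith), show a + (c - a - b) = c - b by ring]
    at hswap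
  have hcoeff : HasSum (fun n => hyp2F1Coeff a b c n * 1 ^ n)
      (Gamma a * Gamma (c - a - b) / Gamma (c - b) / K) := by
    refine (hswap.div_const K).congr_fun fun n => ?_
    simp only [hF]
    rw [hmoment, hyp2F1Coeff, one_pow, mul_one]
    have : K ≠ 0 := by positivity
    field_simp
  rw [hyp2F1_eq_tsum, hcoeff.tsum_eq, hK]
  have := Gamma_pos_of_pos ha
  field_simp

theorem hyp2F1Coeff_self_two (a : ℝ) (n : ℕ) :
    hyp2F1Coeff a a 2 n = ((ascPochhammer ℝ n).eval a / n !) ^ 2 / (n + 1) := by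
  rw [hyp2F1Coeff, ascPochhammer_eval_two, Nat.factorial_succ, Nat.cast_mul]
  push_cast
  field_simp

theorem hyp2F1Coeff_self_two_nonneg (a : ℝ) (n : ℕ) : 0 ≤ hyp2F1Coeff a a 2 n := by
  rw [hyp2F1Coeff_self_two]
  positivity

theorem summable_hyp2F1Coeff_self_two {a : ℝ} (ha0 : 0 < a) (ha1 : a < 1) :
    Summable (hyp2F1Coeff a a 2) := by
  have hrpow : Summable fun n : ℕ => ((n : ℝ) + 1) ^ (2 * a - 3) / Gamma (a + 1) ^ 2 := by
    refine Summable.div_const ?_ _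
    exact_mod_cast (summable_nat_add_iff 1).2 (summable_nat_rpow.2 (by linarith : 2 * a - 3 < -1))
  refine hrpow.of_nonneg_of_le (hyp2F1Coeff_self_two_nonneg a) fun n => ?_
  have hn : (0 : ℝ) < n + 1 := by positivity
  have := ascPochhammer_pos n a ha0
  calc hyp2F1Coeff a a 2 n = ((ascPochhammer ℝ n).eval a / n !) ^ 2 / (n + 1) :=
        hyp2F1Coeff_self_two a n
    _ ≤ (((n : ℝ) + 1) ^ (a - 1) / Gamma (a + 1)) ^ 2 / (n + 1) := by
        gcongr ?_ ^ 2 / _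
        exact ascPochhammer_eval_div_factorial_le ha0 ha1 n
    _ = ((n : ℝ) + 1) ^ (2 * a - 3) / Gamma (a + 1) ^ 2 := by
        rw [div_pow, ← rpow_natCast, ← rpow_mul hn.le, div_right_comm, ← rpow_sub_one hn.ne']
        congr 2
        push_cast
        ring

theorem hyp2F1Coeff_sub_one_one_succ (a : ℝ) (m : ℕ) :
    hyp2F1Coeff a (a - 1) 1 (m + 1) = (a - 1) * (a + m) / (m + 1) * hyp2F1Coeff a a 2 m := by
  rw [hyp2F1Coeff, hyp2F1Coeff, ascPochhammer_eval_one, ascPochhammer_eval_two,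
    ascPochhammer_succ_eval, ascPochhammer_succ_left, Polynomial.eval_mul, Polynomial.eval_X,
    Polynomial.eval_comp, Polynomial.eval_add, Polynomial.eval_X, Polynomial.eval_one,
    sub_add_cancel, Nat.factorial_succ]
  push_cast
  field_simp

theorem summable_abs_hyp2F1Coeff_sub_one_one {a : ℝ} (ha0 : 0 < a) (ha1 : a < 1) :
    Summable fun n => |hyp2F1Coeff a (a - 1) 1 n| := by
  refine (summable_nat_add_iff 1).1 ((summable_hyp2F1Coeff_self_two ha0 ha1).of_nonneg_of_le
    (fun _ => abs_nonneg _) fun m => ?_)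
  rw [hyp2F1Coeff_sub_one_one_succ, abs_mul, abs_of_nonneg (hyp2F1Coeff_self_two_nonneg a m)]
  refine mul_le_of_le_one_left (hyp2F1Coeff_self_two_nonneg a m) ?_
  rw [abs_le]
  have hm : (0 : ℝ) < m + 1 := by positivity
  constructor
  · rw [le_div_iff₀ hm]; nlinarith
  · rw [div_le_iff₀ hm]; nlinarith

theorem mul_rpow_le_mul_rpow_add_sub {p r t : ℝ} (hp : 0 ≤ p) (hpr : p ≤ r) (ht : 0 ≤ t) :
    r * t ^ p ≤ p * t ^ r + (r - p) := by
  rcases (hp.trans hpr).eq_or_lt with rfl | hr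
  · obtain rfl : p = 0 := le_antisymm hpr hp
    simp
  have hbern := rpow_one_add_le_one_add_mul_self (s := t ^ r - 1)
    (by linarith [rpow_nonneg ht r]) (div_nonneg hp hr.le) ((div_le_one hr).2 hpr)
  rw [add_sub_cancel, ← rpow_mul ht, mul_div_cancel₀ _ hr.ne'] at hbern
  have := mul_le_mul_of_nonneg_left hbern hr.le
  rw [mul_add, mul_one, ← mul_assoc, mul_div_cancel₀ _ hr.ne'] at this
  linarith

noncomputable def hyp2F1Combination (a t : ℝ) : ℝ :=
  1 / (1 - a) * hyp2F1 a (a - 1) 1 t + t ^ a * hyp2F1 a a 2 t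

theorem hasSum_hyp2F1Combination {a t : ℝ} (ha0 : 0 < a) (ha1 : a < 1) (ht0 : 0 ≤ t)
    (ht1 : t ≤ 1) :
    HasSum (fun m : ℕ => hyp2F1Coeff a a 2 m / (m + 1) *
        ((m + 1) * t ^ (a + m) - (a + m) * t ^ (m + 1)))
      (hyp2F1Combination a t - 1 / (1 - a)) := by
  have htn (n : ℕ) : ‖t ^ n‖ ≤ 1 := by
    rw [norm_pow, Real.norm_of_nonneg ht0]; exact pow_le_one₀ ht0 ht1
  have hA : HasSum (fun n => hyp2F1Coeff a (a - 1) 1 n * t ^ n) (hyp2F1 a (a - 1) 1 t) :=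
    (Summable.of_norm_bounded (summable_abs_hyp2F1Coeff_sub_one_one ha0 ha1) fun n => by
      rw [norm_mul, Real.norm_eq_abs]
      exact mul_le_of_le_one_right (abs_nonneg _) (htn n)).hasSum
  have hB : HasSum (fun n => hyp2F1Coeff a a 2 n * t ^ n) (hyp2F1 a a 2 t) :=
    (Summable.of_norm_bounded (summable_hyp2F1Coeff_self_two ha0 ha1) fun n => by
      rw [norm_mul, Real.norm_of_nonneg (hyp2F1Coeff_self_two_nonneg a n)]
      exact mul_le_of_le_one_right (hyp2F1Coeff_self_two_nonneg a n) (htn n)).hasSum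
  rw [← hasSum_nat_add_iff' 1, Finset.sum_range_one, hyp2F1Coeff_zero, pow_zero, mul_one] at hA
  have h1a : (1 : ℝ) - a ≠ 0 := by linarith
  have h := (hA.mul_left (1 / (1 - a))).add (hB.mul_left (t ^ a))
  rw [mul_sub, mul_one, sub_add_eq_add_sub, ← hyp2F1Combination] at h
  refine h.congr_fun fun m => ?_
  rw [hyp2F1Coeff_sub_one_one_succ, rpow_add' ht0 (by positivity), rpow_natCast]
  field_simp
  ring

theorem hyp2F1Combination_le_one {a t : ℝ} (ha0 : 0 < a) (ha1 : a < 1) (ht : t ∈ Icc 0 1) :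
    hyp2F1Combination a t ≤ hyp2F1Combination a 1 := by
  have h := hasSum_le (fun m => ?_) (hasSum_hyp2F1Combination ha0 ha1 ht.1 ht.2)
    (hasSum_hyp2F1Combination ha0 ha1 zero_le_one le_rfl)
  · linarith
  have := hyp2F1Coeff_self_two_nonneg a m
  have hamgm := mul_rpow_le_mul_rpow_add_sub (p := a + m) (r := m + 1) (by positivity)
    (by linarith) ht.1
  rw [show (m : ℝ) + 1 = (m + 1 : ℕ) by push_cast; ring, rpow_natCast] at hamgm
  rw [one_rpow, one_pow]
  refine mul_le_mul_of_nonneg_left ?_ (by positivity)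
  push_cast at hamgm ⊢
  linarith

theorem hyp2F1Combination_one {a : ℝ} (ha0 : 0 < a) (ha1 : a < 1) :
    hyp2F1Combination a 1 = 2 * Gamma (2 - 2 * a) / Gamma (2 - a) ^ 2 := by
  rw [hyp2F1Combination, one_rpow, one_mul,
    hyp2F1_one_eq_Gamma ha0 ha1 (by linarith) (summable_abs_hyp2F1Coeff_sub_one_one ha0 ha1),
    hyp2F1_one_eq_Gamma ha0 (by linarith) (by linarith)
      (summable_hyp2F1Coeff_self_two ha0 ha1).abs,
    show (1 : ℝ) - a - (a - 1) = 2 - 2 * a by ring, show (1 : ℝ) - (a - 1) = 2 - a by ring,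
    show (2 : ℝ) - a - a = 2 - 2 * a by ring, show (2 : ℝ) - a = (1 - a) + 1 by ring,
    Gamma_add_one (by linarith), Gamma_one, show (2 : ℝ) = 1 + 1 by norm_num,
    Gamma_add_one one_ne_zero, Gamma_one]
  have := Gamma_pos_of_pos (by linarith : 0 < 1 - a)
  have h1a : (1 : ℝ) - a ≠ 0 := by linarith
  field_simp

theorem stmt_8 (q : ℝ) (hq1 : 1 ≤ q) (hq2 : q < 2) :
    IsGreatest
      ((fun t : ℝ =>
          2 / (2 - q) * hyp2F1 (q / 2) (q / 2 - 1) 1 t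
            + t ^ (q / 2) * hyp2F1 (q / 2) (q / 2) 2 t) '' Set.Icc (0 : ℝ) 1)
      (2 * Real.Gamma (2 - q) / (Real.Gamma (2 - q / 2)) ^ 2) ∧
    (2 / (2 - q) * hyp2F1 (q / 2) (q / 2 - 1) 1 1
        + (1 : ℝ) ^ (q / 2) * hyp2F1 (q / 2) (q / 2) 2 1)
      = 2 * Real.Gamma (2 - q) / (Real.Gamma (2 - q / 2)) ^ 2 := by
  have ha0 : 0 < q / 2 := by linarith
  have ha1 : q / 2 < 1 := by linarith
  have hcomb : (fun t : ℝ => 2 / (2 - q) * hyp2F1 (q / 2) (q / 2 - 1) 1 t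
      + t ^ (q / 2) * hyp2F1 (q / 2) (q / 2) 2 t) = hyp2F1Combination (q / 2) := by
    funext t
    rw [hyp2F1Combination, show 2 / (2 - q) = 1 / (1 - q / 2) by
      rw [div_eq_div_iff (by linarith) (by linarith)]; ring]
  have hvalue : hyp2F1Combination (q / 2) 1 = 2 * Gamma (2 - q) / Gamma (2 - q / 2) ^ 2 := by
    rw [hyp2F1Combination_one ha0 ha1, mul_div_cancel₀ q two_ne_zero]
  rw [hcomb]
  refine ⟨⟨⟨1, right_mem_Icc.2 zero_le_one, hvalue⟩, ?_⟩, (congrFun hcomb 1).trans hvalue⟩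
  rintro _ ⟨t, ht, rfl⟩
  exact (hyp2F1Combination_le_one ha0 ha1 ht).trans hvalue.le
end

section
/- Let d < 1 be an integer and (b_n)_{n ≥ −d} complex numbers with finitely many nonzero. Define on the unit disk h(z) = Σ_{n≥−d} ( ((n+d)/(n+1)) b_n z^{n+d−1} \bar{z}^{n+1} − ((1−d)/(n+1)) \bar{b}_n z^{−d} ), where z^{n+d−1}\bar{z}^{n+1} is interpreted as \bar{z}^{−d+2} |z|^{2(n+d−1)} when n+d−1 < 0. Then ∫_{\mathbb{D}} |h(z)|² dA(z) = Σ_{n,l ≥ −d} b_n \bar{b}_l/(n + l + d + 1). -/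
/-!
Write `d = -D` and index the summands of `h` by `m = n + d ≥ 0`. Expanding `|h|²` as a double sum
over pairs of summands, everything reduces to the moments `∫_𝔻 z^a z̄^b dA = δ_{ab} / (a + 1)`:
they vanish for `a ≠ b` because a rotation `z ↦ ωz` of the disc multiplies the integrand by
`ω^(a-b)`, and on the diagonal the integrand `|z|^(2a)` is radial. Only the pairings of the
`z̄`-heavy parts with each other and of the `z^D` parts with each other survive, and the identity
`m k + (D + 1) (m + k + D + 1) = (m + D + 1) (k + D + 1)` merges them into `1 / (m + k + D + 1)`.
-/

open MeasureTheory Metric ComplexConjugate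

theorem Continuous.integrableOn_ball {E F : Type*} [MetricSpace E] [ProperSpace E]
    [MeasurableSpace E] [OpensMeasurableSpace E] [NormedAddCommGroup F] {μ : Measure E}
    [IsLocallyFiniteMeasure μ] {f : E → F} (hf : Continuous f) (x : E) (r : ℝ) :
    IntegrableOn f (ball x r) μ :=
  (hf.locallyIntegrable.integrableOn_isCompact (isCompact_closedBall x r)).mono_set
    ball_subset_closedBall

lemma integral_norm_sum_sq {X ι : Type*} [MeasurableSpace X] {μ : Measure X} (s : Finset ι)
    (f : ι → X → ℂ) (hf : ∀ i j, Integrable (fun x => f i x * conj (f j x)) μ) :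
    ∫ x, ((‖∑ i ∈ s, f i x‖ : ℝ) : ℂ) ^ 2 ∂μ
      = ∑ i ∈ s, ∑ j ∈ s, ∫ x, f i x * conj (f j x) ∂μ := by
  simp_rw [← Complex.mul_conj', map_sum, Finset.sum_mul_sum]
  rw [integral_finsetSum _ fun i _ => integrable_finsetSum _ fun j _ => hf i j]
  simp_rw [integral_finsetSum _ fun j _ => hf _ j]

lemma tsum_ite_le_eq_tsum_add {α : Type*} [AddCommMonoid α] [TopologicalSpace α] (D : ℕ)
    (f : ℕ → α) : ∑' n, (if D ≤ n then f n else 0) = ∑' m, f (m + D) := by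
  rw [← (add_left_injective D).tsum_eq]
  · simp
  · intro n hn
    exact ⟨n - D, Nat.sub_add_cancel (by_contra fun h => hn (if_neg h))⟩

lemma tsum_tsum_ite_le_and_le_eq_tsum_tsum_add {α : Type*} [AddCommMonoid α] [TopologicalSpace α]
    (D : ℕ) (f : ℕ → ℕ → α) :
    ∑' n, ∑' l, (if D ≤ n ∧ D ≤ l then f n l else 0) = ∑' m, ∑' k, f (m + D) (k + D) := by
  have hrow (n : ℕ) : ∑' l, (if D ≤ n ∧ D ≤ l then f n l else 0)
      = if D ≤ n then ∑' k, f n (k + D) else 0 := by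
    split_ifs with hn
    · simp only [hn, true_and, tsum_ite_le_eq_tsum_add]
    · simp [hn]
  rw [tsum_congr hrow, tsum_ite_le_eq_tsum_add]

lemma setIntegral_ball_pow_mul_conj_pow_of_ne {a b : ℕ} (hab : a ≠ b) (r : ℝ) :
    ∫ z in ball (0 : ℂ) r, z ^ a * conj z ^ b = 0 := by
  set ω : Circle := Circle.exp (Real.pi / ((a : ℝ) - b))
  have hω : (ω : ℂ) ^ a * conj (ω : ℂ) ^ b = -1 := by
    have hab' : (a : ℂ) - b ≠ 0 := sub_ne_zero.mpr (by exact_mod_cast hab)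
    rw [Circle.coe_exp, ← Complex.exp_conj, ← Complex.exp_nat_mul, ← Complex.exp_nat_mul,
      ← Complex.exp_add, ← Complex.exp_pi_mul_I]
    congr 1
    simp only [map_mul, Complex.conj_ofReal, Complex.conj_I]
    push_cast
    field_simp
    ring
  have hrot := (rotation ω).measurePreserving.setIntegral_preimage_emb
    (rotation ω).toHomeomorph.measurableEmbedding (fun z => z ^ a * conj z ^ b) (ball 0 r)
  simp only [LinearIsometryEquiv.preimage_ball, map_zero, rotation_apply, mul_pow, map_mul] at hrot
  simp_rw [mul_mul_mul_comm _ (_ ^ a), hω, neg_one_mul, integral_neg] at hrot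
  linear_combination -hrot / 2

lemma setIntegral_unitBall_norm_pow (k : ℕ) :
    ∫ z in ball (0 : ℂ) 1, ‖z‖ ^ k = 2 * Real.pi / (k + 2) := by
  have hradial : (ball (0 : ℂ) 1).indicator (fun z => ‖z‖ ^ k)
      = fun z => (Set.Iio (1 : ℝ)).indicator (fun r => r ^ k) ‖z‖ := by
    ext z; by_cases hz : ‖z‖ < 1 <;> simp [hz]
  have hpolar : ∫ r in Set.Ioi (0 : ℝ), r ^ 1 • (Set.Iio (1 : ℝ)).indicator (fun r => r ^ k) r
      = 1 / (k + 2) := by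
    have hintegrand : (fun r : ℝ => r ^ 1 • (Set.Iio (1 : ℝ)).indicator (fun r => r ^ k) r)
        = (Set.Iio (1 : ℝ)).indicator (fun r => r ^ (k + 1)) := by
      ext r; by_cases hr : r < 1 <;> simp [hr, pow_succ']
    rw [hintegrand, setIntegral_indicator measurableSet_Iio, Set.Ioi_inter_Iio,
      ← integral_Ioc_eq_integral_Ioo, ← intervalIntegral.integral_of_le zero_le_one, integral_pow]
    push_cast; ring
  rw [← integral_indicator measurableSet_ball, hradial, integral_fun_norm_addHaar,
    Complex.finrank_real_complex, hpolar]
  simp only [Measure.real, Complex.volume_ball, ENNReal.ofReal_one, one_pow, one_mul,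
    ENNReal.coe_toReal, NNReal.coe_real_pi, smul_eq_mul, nsmul_eq_mul, Nat.cast_ofNat]
  ring

lemma setIntegral_unitBall_pow_mul_conj_pow (a b : ℕ) :
    ∫ z in ball (0 : ℂ) 1, z ^ a * conj z ^ b = if a = b then (Real.pi : ℂ) / (a + 1) else 0 := by
  split_ifs with hab
  · subst hab
    have hnorm (z : ℂ) : z ^ a * conj z ^ a = ((‖z‖ ^ (2 * a) : ℝ) : ℂ) := by
      rw [← mul_pow, Complex.mul_conj', pow_mul]; push_cast; ring
    simp_rw [hnorm]
    rw [integral_complex_ofReal, setIntegral_unitBall_norm_pow]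
    push_cast
    field_simp
  · exact setIntegral_ball_pow_mul_conj_pow_of_ne hab 1

lemma setIntegral_ball_sub_mul_conj_sub (r : ℝ) (α β α' β' : ℂ) (a b a' b' e : ℕ) :
    ∫ z in ball (0 : ℂ) r,
        (α * (z ^ a * conj z ^ b) - β * z ^ e) * conj (α' * (z ^ a' * conj z ^ b') - β' * z ^ e)
      = α * conj α' * (∫ z in ball (0 : ℂ) r, z ^ (a + b') * conj z ^ (b + a'))
        - α * conj β' * (∫ z in ball (0 : ℂ) r, z ^ a * conj z ^ (b + e))
        - β * conj α' * (∫ z in ball (0 : ℂ) r, z ^ (e + b') * conj z ^ a')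
        + β * conj β' * (∫ z in ball (0 : ℂ) r, z ^ e * conj z ^ e) := by
  have hexpand (z : ℂ) :
      (α * (z ^ a * conj z ^ b) - β * z ^ e) * conj (α' * (z ^ a' * conj z ^ b') - β' * z ^ e)
        = α * conj α' * (z ^ (a + b') * conj z ^ (b + a'))
          - α * conj β' * (z ^ a * conj z ^ (b + e))
          - β * conj α' * (z ^ (e + b') * conj z ^ a')
          + β * conj β' * (z ^ e * conj z ^ e) := by
    simp only [map_sub, map_mul, map_pow, Complex.conj_conj, pow_add]
    ring
  simp_rw [hexpand]
  rw [integral_add, integral_sub, integral_sub, integral_const_mul, integral_const_mul,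
    integral_const_mul, integral_const_mul]
  all_goals exact Continuous.integrableOn_ball (by fun_prop) 0 r

/-- The `n`-th summand of `h` for `d = -D`, indexed by `m = n + d`. At `m = 0` the truncated
exponent `m - 1` is harmless, its coefficient being `0`. -/
noncomputable def beurlingTerm (D : ℕ) (a : ℂ) (m : ℕ) (z : ℂ) : ℂ :=
  (m / (m + D + 1) * a) * (z ^ (m - 1) * conj z ^ (m + D + 1))
    - ((D + 1) / (m + D + 1) * conj a) * z ^ D

lemma setIntegral_unitBall_beurlingTerm_mul_conj (D m k : ℕ) (a a' : ℂ) :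
    ∫ z in ball (0 : ℂ) 1, beurlingTerm D a m z * conj (beurlingTerm D a' k z)
      = Real.pi * (m / (m + D + 1) * a * conj (k / (k + D + 1) * a') / (m + k + D + 1)
        + (D + 1) / (m + D + 1) * conj a * conj ((D + 1) / (k + D + 1) * conj a') / (D + 1)) := by
  have hdiag : m / (m + D + 1) * a * conj (k / (k + D + 1) * a')
      * (∫ z in ball (0 : ℂ) 1, z ^ (m - 1 + (k + D + 1)) * conj z ^ (m + D + 1 + (k - 1)))
      = Real.pi * (m / (m + D + 1) * a * conj (k / (k + D + 1) * a') / (m + k + D + 1)) := by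
    rcases Nat.eq_zero_or_pos m with rfl | hm
    · simp
    rcases Nat.eq_zero_or_pos k with rfl | hk
    · simp
    rw [setIntegral_unitBall_pow_mul_conj_pow, if_pos (by omega)]
    push_cast [Nat.cast_sub hm, Nat.cast_sub hk]
    ring
  simp only [beurlingTerm]
  rw [setIntegral_ball_sub_mul_conj_sub, hdiag,
    setIntegral_unitBall_pow_mul_conj_pow, setIntegral_unitBall_pow_mul_conj_pow,
    setIntegral_unitBall_pow_mul_conj_pow, if_neg (by omega), if_neg (by omega), if_pos rfl]
  ring

lemma beurlingTerm_coeff_symmetrize (D m k : ℕ) (a a' : ℂ) :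
    m / (m + D + 1) * a * conj (k / (k + D + 1) * a') / (m + k + D + 1)
      + (D + 1) / (k + D + 1) * conj a' * conj ((D + 1) / (m + D + 1) * conj a) / (D + 1)
      = a * conj a' / (m + k + D + 1) := by
  have h1 : (m : ℂ) + D + 1 ≠ 0 := by norm_cast
  have h2 : (k : ℂ) + D + 1 ≠ 0 := by norm_cast
  have h3 : (m : ℂ) + k + D + 1 ≠ 0 := by norm_cast
  have h4 : (D : ℂ) + 1 ≠ 0 := by norm_cast
  simp only [map_mul, map_div₀, map_add, map_natCast, map_one, Complex.conj_conj]
  field_simp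
  ring

theorem integral_norm_sum_beurlingTerm_sq (D : ℕ) (c : ℕ → ℂ) (s : Finset ℕ) :
    (Real.pi : ℂ)⁻¹ * ∫ z in ball (0 : ℂ) 1, ((‖∑ m ∈ s, beurlingTerm D (c m) m z‖ : ℝ) : ℂ) ^ 2
      = ∑ m ∈ s, ∑ k ∈ s, c m * conj (c k) / (m + k + D + 1) := by
  have hint (m k : ℕ) : IntegrableOn
      (fun z => beurlingTerm D (c m) m z * conj (beurlingTerm D (c k) k z)) (ball 0 1) :=
    Continuous.integrableOn_ball (by unfold beurlingTerm; fun_prop) 0 1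
  have hπ : (Real.pi : ℂ) ≠ 0 := Complex.ofReal_ne_zero.mpr Real.pi_ne_zero
  simp_rw [integral_norm_sum_sq s _ hint, setIntegral_unitBall_beurlingTerm_mul_conj,
    Finset.mul_sum, inv_mul_cancel_left₀ hπ, Finset.sum_add_distrib]
  conv_lhs => enter [2]; rw [Finset.sum_comm]
  simp_rw [← Finset.sum_add_distrib, beurlingTerm_coeff_symmetrize]

theorem stmt_18 (d : ℤ) (hd : d < 1) (b : ℕ → ℂ) (hb : (Function.support b).Finite)
    (h : ℂ → ℂ)
    (hh : ∀ z : ℂ, h z = ∑' n : ℕ,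
      if -d ≤ (n : ℤ) then
        (((n : ℂ) + d) / (n + 1)) * b n * z ^ ((n : ℤ) + d - 1).toNat
            * (starRingEnd ℂ z) ^ (n + 1)
          - ((1 - d : ℂ) / (n + 1)) * starRingEnd ℂ (b n) * z ^ (-d).toNat
      else 0) :
    ((Real.pi : ℂ))⁻¹ * (∫ z in ball (0 : ℂ) 1, ((‖h z‖ : ℝ) : ℂ) ^ 2)
      = ∑' n : ℕ, ∑' l : ℕ,
          if -d ≤ (n : ℤ) ∧ -d ≤ (l : ℤ) then
            b n * starRingEnd ℂ (b l) / (((n : ℤ) + l + d + 1 : ℤ) : ℂ)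
          else 0 := by
  obtain ⟨D, rfl⟩ : ∃ D : ℕ, d = -D := ⟨(-d).toNat, by omega⟩
  have hc : (Function.support fun m => b (m + D)).Finite :=
    hb.preimage (add_left_injective D).injOn
  set s := hc.toFinset
  have hvanish {f : ℕ → ℂ} (hf : ∀ m, b (m + D) = 0 → f m = 0) : ∑' m, f m = ∑ m ∈ s, f m :=
    tsum_eq_sum fun m hm => hf m (by simpa [s] using hm)
  have hh' (z : ℂ) : h z = ∑ m ∈ s, beurlingTerm D (b (m + D)) m z := by
    simp only [hh, neg_neg, Nat.cast_le, tsum_ite_le_eq_tsum_add]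
    rw [hvanish (by intro m hm; simp [hm])]
    refine Finset.sum_congr rfl fun m _ => ?_
    rw [show (((m + D : ℕ) : ℤ) + -(D : ℤ) - 1).toNat = m - 1 by omega]
    simp only [Nat.cast_add, Int.cast_neg, Int.cast_natCast, add_neg_cancel_right,
      sub_neg_eq_add, Int.toNat_natCast, beurlingTerm]
    ring
  simp_rw [hh', integral_norm_sum_beurlingTerm_sq, neg_neg, Nat.cast_le,
    tsum_tsum_ite_le_and_le_eq_tsum_tsum_add]
  rw [tsum_congr fun m => hvanish (by intro k hk; simp [hk]), hvanish (by intro m hm; simp [hm])]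
  refine Finset.sum_congr rfl fun m _ => Finset.sum_congr rfl fun k _ => ?_
  push_cast
  ring
end
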